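/- In the entanglement-assisted setting where each of t linearly independent training states has Schmidt rank r and is learned perfectly, so that U†V = e^{iθ}I_{rt} ⊕ Y with Y Haar-random on U(N−rt), the average risk equals exactly 1 − (N + r²t² + 1)/(N(N+1)). -/

import Mathlib

/-!
Write the trace as `c + tr Y` with `‖c‖ = rt`. Invariance of the Haar measure under `Y ↦ -Y`
gives `𝔼[tr Y] = 0`, so `𝔼‖c + tr Y‖² = ‖c‖² + 𝔼‖tr Y‖²`. Left multiplication by a diagonal
sign matrix kills the cross terms `𝔼[Y i i * conj (Y j j)]`, `i ≠ j`, while invariance under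
permutation matrices and the unit norm of the columns give `𝔼‖Y i i‖² = 1 / n`. Hence
`𝔼‖tr Y‖² = 1`.
-/

open MeasureTheory Matrix ComplexConjugate

theorem MeasureTheory.integral_norm_const_add_sq {Ω E : Type*} [MeasurableSpace Ω]
    {μ : Measure Ω} [IsProbabilityMeasure μ] [NormedAddCommGroup E] [InnerProductSpace ℝ E]
    [CompleteSpace E] {X : Ω → E} (hX : Integrable X μ)
    (hX2 : Integrable (fun ω => ‖X ω‖ ^ 2) μ) (hmean : ∫ ω, X ω ∂μ = 0) (c : E) :
    ∫ ω, ‖c + X ω‖ ^ 2 ∂μ = ‖c‖ ^ 2 + ∫ ω, ‖X ω‖ ^ 2 ∂μ := by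
  have hcross : Integrable (fun ω => 2 * inner ℝ c (X ω)) μ := (hX.const_inner c).const_mul 2
  simp_rw [norm_add_sq_real]
  rw [integral_add (f := fun ω => ‖c‖ ^ 2 + 2 * inner ℝ c (X ω))
    ((integrable_const _).add hcross) hX2, integral_add (integrable_const _) hcross,
    integral_const_mul, integral_inner hX, hmean, inner_zero_right]
  simp

namespace Matrix

variable {ι R : Type*} [Fintype ι] [DecidableEq ι] [CommRing R] [StarRing R]

theorem permMatrix_mem_unitaryGroup (σ : Equiv.Perm ι) : σ.permMatrix R ∈ unitaryGroup ι R := by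
  rw [mem_unitaryGroup_iff', star_eq_conjTranspose, conjTranspose_permMatrix, ← permMatrix_mul,
    mul_inv_cancel, permMatrix_one]

theorem diagonal_mem_unitaryGroup {d : ι → R} (hd : ∀ i, star (d i) * d i = 1) :
    diagonal d ∈ unitaryGroup ι R := by
  rw [mem_unitaryGroup_iff', star_eq_conjTranspose, diagonal_conjTranspose, diagonal_mul_diagonal,
    ← diagonal_one]
  exact congrArg diagonal (funext hd)

namespace UnitaryGroup

variable (ι) in
instance : CompactSpace (unitaryGroup ι ℂ) := by
  refine isCompact_iff_compactSpace.mp <|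
    (isCompact_univ_pi fun i => isCompact_univ_pi fun j => isCompact_closedBall (0 : ℂ) 1)
      |>.of_isClosed_subset ?_ fun U hU i _ j _ => ?_
  · have : (unitaryGroup ι ℂ : Set (Matrix ι ι ℂ)) = (fun A => star A * A) ⁻¹' {1} :=
      Set.ext fun A => mem_unitaryGroup_iff'
    rw [this]
    exact isClosed_singleton.preimage (by fun_prop)
  · simpa using entry_norm_bound_of_unitary hU i j

@[fun_prop]
theorem continuous_entry (i j : ι) :
    Continuous fun U : unitaryGroup ι ℂ => (U : Matrix ι ι ℂ) i j :=
  continuous_subtype_val.matrix_elem i j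

theorem sum_normSq_entry_eq_one {U : Matrix ι ι ℂ} (hU : U ∈ unitaryGroup ι ℂ) (j : ι) :
    ∑ i, Complex.normSq (U i j) = 1 := by
  have h : (star U * U) j j = 1 := by rw [mem_unitaryGroup_iff'.mp hU, one_apply_eq]
  rw [Matrix.mul_apply] at h
  simp only [Matrix.star_apply, Complex.star_def, ← Complex.normSq_eq_conj_mul_self] at h
  exact_mod_cast h

theorem integrable_of_continuous [MeasurableSpace (unitaryGroup ι ℂ)]
    [OpensMeasurableSpace (unitaryGroup ι ℂ)] {μ : Measure (unitaryGroup ι ℂ)} [IsFiniteMeasure μ]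
    {E : Type*} [NormedAddCommGroup E] {f : unitaryGroup ι ℂ → E} (hf : Continuous f) :
    Integrable f μ :=
  hf.integrable_of_hasCompactSupport (HasCompactSupport.of_compactSpace f)

variable [MeasurableSpace (unitaryGroup ι ℂ)] [BorelSpace (unitaryGroup ι ℂ)]
  {μ : Measure (unitaryGroup ι ℂ)} [μ.IsMulLeftInvariant]

theorem integral_trace_eq_zero : ∫ U : unitaryGroup ι ℂ, trace (U : Matrix ι ι ℂ) ∂μ = 0 :=
  integral_eq_zero_of_mul_left_eq_neg (g := -1) fun U => by simp [Unitary.coe_neg]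

theorem integral_entry_mul_conj_entry_of_ne {i j : ι} (hij : i ≠ j) (k l : ι) :
    ∫ U : unitaryGroup ι ℂ, (U : Matrix ι ι ℂ) i k * conj ((U : Matrix ι ι ℂ) j l) ∂μ = 0 := by
  let d : ι → ℂ := Function.update 1 i (-1)
  have hd : ∀ a, star (d a) * d a = 1 := fun a => by
    by_cases ha : a = i <;> simp [d, ha]
  refine integral_eq_zero_of_mul_left_eq_neg (g := ⟨diagonal d, diagonal_mem_unitaryGroup hd⟩)
    fun U => ?_
  simp [d, diagonal_mul, hij.symm]

theorem integral_normSq_entry [IsProbabilityMeasure μ] (i j : ι) :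
    ∫ U : unitaryGroup ι ℂ, Complex.normSq ((U : Matrix ι ι ℂ) i j) ∂μ =
      (Fintype.card ι : ℝ)⁻¹ := by
  have row_invariant (a : ι) :
      ∫ U : unitaryGroup ι ℂ, Complex.normSq ((U : Matrix ι ι ℂ) a j) ∂μ =
        ∫ U : unitaryGroup ι ℂ, Complex.normSq ((U : Matrix ι ι ℂ) i j) ∂μ := by
    have := integral_mul_left_eq_self (μ := μ) (fun U => Complex.normSq ((U : Matrix ι ι ℂ) i j))
      ⟨(Equiv.swap i a).permMatrix ℂ, permMatrix_mem_unitaryGroup _⟩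
    simpa [PEquiv.toMatrix_toPEquiv_mul] using this
  have : Nonempty ι := ⟨i⟩
  refine eq_inv_of_mul_eq_one_right ?_
  calc (Fintype.card ι : ℝ) * ∫ U : unitaryGroup ι ℂ, Complex.normSq ((U : Matrix ι ι ℂ) i j) ∂μ
      = ∑ a, ∫ U : unitaryGroup ι ℂ, Complex.normSq ((U : Matrix ι ι ℂ) a j) ∂μ := by
        rw [Finset.sum_congr rfl fun a _ => row_invariant a, Finset.sum_const, Finset.card_univ,
          nsmul_eq_mul]
    _ = ∫ U : unitaryGroup ι ℂ, ∑ a, Complex.normSq ((U : Matrix ι ι ℂ) a j) ∂μ :=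
        (integral_finsetSum _ fun a _ => integrable_of_continuous (by fun_prop)).symm
    _ = ∫ U : unitaryGroup ι ℂ, (1 : ℝ) ∂μ :=
        integral_congr_ae (ae_of_all _ fun U => sum_normSq_entry_eq_one U.2 j)
    _ = 1 := by simp

theorem integral_norm_trace_sq [IsProbabilityMeasure μ] [Nonempty ι] :
    ∫ U : unitaryGroup ι ℂ, ‖trace (U : Matrix ι ι ℂ)‖ ^ 2 ∂μ = 1 := by
  have hint (i j : ι) : Integrable (fun U : unitaryGroup ι ℂ =>
      (U : Matrix ι ι ℂ) i i * conj ((U : Matrix ι ι ℂ) j j)) μ :=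
    integrable_of_continuous (by fun_prop)
  have hdiag (i : ι) : ∫ U : unitaryGroup ι ℂ,
      (U : Matrix ι ι ℂ) i i * conj ((U : Matrix ι ι ℂ) i i) ∂μ = (Fintype.card ι : ℂ)⁻¹ := by
    simp_rw [Complex.mul_conj]
    rw [integral_complex_ofReal, integral_normSq_entry]
    simp
  apply Complex.ofReal_injective
  calc ((∫ U : unitaryGroup ι ℂ, ‖trace (U : Matrix ι ι ℂ)‖ ^ 2 ∂μ : ℝ) : ℂ)
      = ∫ U : unitaryGroup ι ℂ, ∑ i, ∑ j,
          (U : Matrix ι ι ℂ) i i * conj ((U : Matrix ι ι ℂ) j j) ∂μ := by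
        rw [← integral_complex_ofReal]
        refine integral_congr_ae (ae_of_all _ fun U => ?_)
        simp only [Complex.ofReal_pow, ← Complex.mul_conj', trace, diag, map_sum,
          Finset.sum_mul, Finset.mul_sum]
        exact Finset.sum_comm
    _ = ∑ i, ∑ j, ∫ U : unitaryGroup ι ℂ,
          (U : Matrix ι ι ℂ) i i * conj ((U : Matrix ι ι ℂ) j j) ∂μ := by
        rw [integral_finsetSum _ fun i _ => integrable_finsetSum _ fun j _ => hint i j]
        exact Finset.sum_congr rfl fun i _ => integral_finsetSum _ fun j _ => hint i j
    _ = ∑ _i : ι, (Fintype.card ι : ℂ)⁻¹ := Finset.sum_congr rfl fun i _ => by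
        rw [Finset.sum_eq_single i (fun j _ hji => integral_entry_mul_conj_entry_of_ne hji.symm _ _)
          (by simp), hdiag]
    _ = ((1 : ℝ) : ℂ) := by simp

theorem integral_norm_add_trace_sq [IsProbabilityMeasure μ] [Nonempty ι] (c : ℂ) :
    ∫ U : unitaryGroup ι ℂ, ‖c + trace (U : Matrix ι ι ℂ)‖ ^ 2 ∂μ = ‖c‖ ^ 2 + 1 := by
  rw [integral_norm_const_add_sq (integrable_of_continuous (by fun_prop))
    (integrable_of_continuous (by fun_prop)) integral_trace_eq_zero, integral_norm_trace_sq]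

end UnitaryGroup

end Matrix

open MeasureTheory Matrix in
theorem nfl_entanglement_average_risk_general (N r t : ℕ)
    (hrt : r * t < N)
    [MeasurableSpace (Matrix.unitaryGroup (Fin (N - r * t)) ℂ)]
    [BorelSpace (Matrix.unitaryGroup (Fin (N - r * t)) ℂ)]
    (μ : Measure (Matrix.unitaryGroup (Fin (N - r * t)) ℂ))
    [μ.IsHaarMeasure] [IsProbabilityMeasure μ]
    (θ : ℝ) :
    ∫ Y : Matrix.unitaryGroup (Fin (N - r * t)) ℂ,
        (1 - ((N : ℝ) +
          ‖(r * t : ℕ) * Complex.exp (θ * Complex.I) +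
            Matrix.trace (Y : Matrix (Fin (N - r * t)) (Fin (N - r * t)) ℂ)‖ ^ 2) /
          (N * (N + 1))) ∂μ =
      1 - ((N : ℝ) + r ^ 2 * t ^ 2 + 1) / (N * (N + 1)) := by
  have : Nonempty (Fin (N - r * t)) := ⟨⟨0, Nat.sub_pos_of_lt hrt⟩⟩
  set c : ℂ := (r * t : ℕ) * Complex.exp (θ * Complex.I)
  have hc : ‖c‖ ^ 2 = (r : ℝ) ^ 2 * t ^ 2 := by
    simp [c, Complex.norm_exp_ofReal_mul_I, mul_pow]
  have hX : Integrable (fun Y : unitaryGroup (Fin (N - r * t)) ℂ =>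
      (N : ℝ) + ‖c + trace (Y : Matrix (Fin (N - r * t)) (Fin (N - r * t)) ℂ)‖ ^ 2) μ :=
    UnitaryGroup.integrable_of_continuous (by fun_prop)
  rw [integral_sub (integrable_const 1) (hX.div_const _), integral_div,
    integral_add (integrable_const _) (UnitaryGroup.integrable_of_continuous (by fun_prop)),
    UnitaryGroup.integral_norm_add_trace_sq, hc]
  simp only [integral_const, probReal_univ, one_smul]
  ring

open MeasureTheory Matrix in
/-- Entanglement-assisted NFL: with `t` linearly independent training states of Schmidt
rank `r` learned perfectly, so that `U†V = e^{iθ}I_{rt} ⊕ Y` with `Y` Haar-random on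
`U(N−rt)`, the average risk `1 − (N + |tr(U†V)|²)/(N(N+1))` equals exactly
`1 − (N + r²t² + 1)/(N(N+1))`. -/
theorem nfl_entanglement_average_risk (N r t : ℕ) (hr : 0 < r) (ht : 0 < t)
    (hrt : r * t < N)
    [MeasurableSpace (Matrix.unitaryGroup (Fin (N - r * t)) ℂ)]
    [BorelSpace (Matrix.unitaryGroup (Fin (N - r * t)) ℂ)]
    (μ : Measure (Matrix.unitaryGroup (Fin (N - r * t)) ℂ))
    [μ.IsHaarMeasure] [IsProbabilityMeasure μ]
    (θ : ℝ) :
    ∫ Y : Matrix.unitaryGroup (Fin (N - r * t)) ℂ,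
        (1 - ((N : ℝ) +
          ‖(r * t : ℕ) * Complex.exp (θ * Complex.I) +
            Matrix.trace (Y : Matrix (Fin (N - r * t)) (Fin (N - r * t)) ℂ)‖ ^ 2) /
          (N * (N + 1))) ∂μ =
      1 - ((N : ℝ) + r ^ 2 * t ^ 2 + 1) / (N * (N + 1)) :=
  nfl_entanglement_average_risk_general N r t hrt μ θ
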